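/- Let p > 1, let α₁, α₂ be nonzero real numbers and β₁, β₂ ∈ ℝ, and define R(β₁, β₂) = (|β₁|^p/φ_p(α₁) − |β₂|^p/φ_p(α₂)) · φ_p(α₁ − α₂) − |β₁ − β₂|^p. Then: if α₂/α₁ < 0 then R(β₁, β₂) ≥ 0; if α₂/α₁ > 0 then R(β₁, β₂) ≤ 0; and in either case R(β₁, β₂) = 0 if and only if β₁ α₂ = β₂ α₁. -/
import Mathlib


noncomputable section

/-- `φ_p(x) = |x|^{p-2} x` (real exponent, `φ_p(0) = 0`). -/
def phiP (p x : ℝ) : ℝ := |x| ^ (p - 2) * x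

open Real Set

lemma strict_cvx {p : ℝ} (hp : 1 < p) : StrictConvexOn ℝ Set.univ (fun x : ℝ => |x| ^ p) := by
  have hp0 : 0 < p := by linarith
  refine ⟨convex_univ, ?_⟩
  intro x _ y _ hxy a b ha hb hab
  simp only [smul_eq_mul]
  have S := strictConvexOn_rpow hp
  by_cases habs : |x| = |y|
  · -- then y = -x, x ≠ 0
    have hx0 : x ≠ 0 := by
      rintro rfl
      apply hxy
      simp only [abs_zero] at habs
      exact (abs_eq_zero.mp habs.symm).symm
    have hax : |a * x + b * y| < a * |x| + b * |y| := by
      rcases abs_eq_abs.mp habs with h | h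
      · exact absurd h hxy
      · have hy : y = -x := by linarith [h]
        subst hy
        have h2 : |a * x + b * -x| = |a - b| * |x| := by rw [← abs_mul]; ring_nf
        rw [h2, abs_neg]
        have h1 : |a - b| < a + b := by
          rw [abs_lt]; constructor <;> linarith
        nlinarith [abs_pos.mpr hx0]
    calc |a * x + b * y| ^ p < (a * |x| + b * |y|) ^ p := by
          exact Real.rpow_lt_rpow (abs_nonneg _) hax hp0
      _ = (a * |x| + b * |x|) ^ p := by rw [habs]
      _ = |x| ^ p := by rw [← add_mul, hab, one_mul]
      _ = a * |x| ^ p + b * |x| ^ p := by rw [← add_mul, hab, one_mul]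
      _ = a * |x| ^ p + b * |y| ^ p := by rw [habs]
  · have h1 : |a * x + b * y| ^ p ≤ (a * |x| + b * |y|) ^ p := by
      apply Real.rpow_le_rpow (abs_nonneg _) _ hp0.le
      calc |a * x + b * y| ≤ |a * x| + |b * y| := abs_add_le _ _
        _ = a * |x| + b * |y| := by rw [abs_mul, abs_mul, abs_of_pos ha, abs_of_pos hb]
    have h2 := S.2 (mem_Ici.mpr (abs_nonneg x)) (mem_Ici.mpr (abs_nonneg y)) habs ha hb hab
    simp only [smul_eq_mul] at h2
    linarith

lemma radon {p s t : ℝ} (hp : 1 < p) (hs : 0 < s) (ht : 0 < t) (a b : ℝ) :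
    |a + b| ^ p ≤ (s+t)^(p-1) * (|a|^p / s^(p-1) + |b|^p / t^(p-1)) ∧
    (|a + b| ^ p = (s+t)^(p-1) * (|a|^p / s^(p-1) + |b|^p / t^(p-1)) ↔ a * t = b * s) := by
  have hst : 0 < s + t := by linarith
  have hS : s ^ p = s ^ (p-1) * s := by
    rw [← Real.rpow_add_one hs.ne']; norm_num
  have hT : t ^ p = t ^ (p-1) * t := by
    rw [← Real.rpow_add_one ht.ne']; norm_num
  have hM : (s+t) ^ p = (s+t) ^ (p-1) * (s+t) := by
    rw [← Real.rpow_add_one hst.ne']; norm_num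
  have hS1 : (0:ℝ) < s ^ (p-1) := Real.rpow_pos_of_pos hs _
  have hT1 : (0:ℝ) < t ^ (p-1) := Real.rpow_pos_of_pos ht _
  have hM1 : (0:ℝ) < (s+t) ^ (p-1) := Real.rpow_pos_of_pos hst _
  by_cases hc : a * t = b * s
  · -- equality case
    have hb : b = (a/s) * t := by field_simp; linarith
    have ha : a = (a/s) * s := by field_simp
    set c := a / s with hcdef
    have key : |a + b| ^ p = (s+t)^(p-1) * (|a|^p / s^(p-1) + |b|^p / t^(p-1)) := by
      rw [hb, ha]
      have e1 : c * s + c * t = c * (s+t) := by ring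
      rw [e1, abs_mul, abs_mul, abs_mul, abs_of_pos hs, abs_of_pos ht, abs_of_pos hst,
        Real.mul_rpow (abs_nonneg _) hst.le,
        Real.mul_rpow (abs_nonneg _) hs.le, Real.mul_rpow (abs_nonneg _) ht.le,
        hS, hT, hM]
      field_simp
    exact ⟨key.le, by simp [key, hc]⟩
  · -- strict case
    have hne : a / s ≠ b / t := by
      intro h; apply hc
      field_simp at h; linarith
    have hlt := (strict_cvx hp).2 (Set.mem_univ (a/s)) (Set.mem_univ (b/t)) hne
      (show (0:ℝ) < s/(s+t) by positivity) (show (0:ℝ) < t/(s+t) by positivity)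
      (show s/(s+t) + t/(s+t) = 1 by field_simp)
    simp only [smul_eq_mul] at hlt
    have e1 : s/(s+t) * (a/s) + t/(s+t) * (b/t) = (a+b)/(s+t) := by
      field_simp
    rw [e1] at hlt
    have e2 : |(a+b)/(s+t)| ^ p = |a+b|^p / (s+t)^p := by
      rw [abs_div, abs_of_pos hst, Real.div_rpow (abs_nonneg _) hst.le]
    have e3 : |a/s| ^ p = |a|^p / s^p := by
      rw [abs_div, abs_of_pos hs, Real.div_rpow (abs_nonneg _) hs.le]
    have e4 : |b/t| ^ p = |b|^p / t^p := by
      rw [abs_div, abs_of_pos ht, Real.div_rpow (abs_nonneg _) ht.le]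
    rw [e2, e3, e4, hS, hT, hM] at hlt
    have key : |a + b| ^ p < (s+t)^(p-1) * (|a|^p / s^(p-1) + |b|^p / t^(p-1)) := by
      rw [div_lt_iff₀ (by positivity)] at hlt
      have e5 : (s / (s + t) * (|a| ^ p / (s ^ (p - 1) * s)) +
          t / (s + t) * (|b| ^ p / (t ^ (p - 1) * t))) * ((s+t)^(p-1)*(s+t))
          = (s+t)^(p-1) * (|a|^p / s^(p-1) + |b|^p / t^(p-1)) := by
        field_simp
      rw [e5] at hlt
      exact hlt
    exact ⟨key.le, by constructor <;> intro h; exacts [absurd h key.ne, absurd h hc]⟩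

lemma phiP_pos {p x : ℝ} (hx : 0 < x) : phiP p x = x ^ (p - 1) := by
  rw [phiP, abs_of_pos hx, ← Real.rpow_add_one hx.ne']
  congr 1; ring

lemma phiP_neg' (p x : ℝ) : phiP p (-x) = - phiP p x := by
  rw [phiP, phiP, abs_neg]; ring

lemma phiP_of_neg {p x : ℝ} (hx : x < 0) : phiP p x = -((-x) ^ (p - 1)) := by
  have h := phiP_neg' p (-x)
  rw [neg_neg] at h
  rw [h, phiP_pos (neg_pos.mpr hx)]

lemma phiP_zero (p : ℝ) : phiP p 0 = 0 := by simp [phiP]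

lemma stmt19_aux (p : ℝ) (hp : 1 < p) (α₁ α₂ : ℝ) (h1 : 0 < α₁) (hα₂ : α₂ ≠ 0)
    (β₁ β₂ : ℝ) (R : ℝ)
    (hR : R = (|β₁| ^ p / phiP p α₁ - |β₂| ^ p / phiP p α₂) * phiP p (α₁ - α₂)
      - |β₁ - β₂| ^ p) :
    (α₂ / α₁ < 0 → 0 ≤ R) ∧ (0 < α₂ / α₁ → R ≤ 0) ∧ (R = 0 ↔ β₁ * α₂ = β₂ * α₁) := by
  have hu : (0:ℝ) < α₁ ^ (p-1) := Real.rpow_pos_of_pos h1 _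
  rcases hα₂.lt_or_gt with h2 | h2
  · -- Case A : α₂ < 0
    have ht : (0:ℝ) < -α₂ := neg_pos.mpr h2
    have htv : (0:ℝ) < (-α₂) ^ (p-1) := Real.rpow_pos_of_pos ht _
    have key := radon hp h1 ht β₁ (-β₂)
    have e1 : β₁ + -β₂ = β₁ - β₂ := by ring
    have e2 : α₁ + -α₂ = α₁ - α₂ := by ring
    have e3 : |(-β₂)| = |β₂| := abs_neg _
    rw [e1, e2, e3] at key
    have hphi2 : phiP p α₂ = -((-α₂) ^ (p-1)) := phiP_of_neg h2
    have hphi3 : phiP p (α₁ - α₂) = (α₁ - α₂) ^ (p-1) := phiP_pos (by linarith)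
    have hRR : R = (α₁ - α₂) ^ (p-1) * (|β₁|^p / α₁^(p-1) + |β₂|^p / (-α₂)^(p-1))
        - |β₁ - β₂| ^ p := by
      rw [hR, phiP_pos h1, hphi2, hphi3]
      field_simp [hu.ne', htv.ne']
      ring
    refine ⟨fun _ => by linarith [key.1], fun h => absurd (div_neg_of_neg_of_pos h2 h1) (by linarith), ?_⟩
    rw [hRR, sub_eq_zero, eq_comm, key.2]
    constructor <;> intro h <;> linarith
  · -- Case B : 0 < α₂
    have hv : (0:ℝ) < α₂ ^ (p-1) := Real.rpow_pos_of_pos h2 _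
    have hd : 0 < α₂ / α₁ := div_pos h2 h1
    rcases lt_trichotomy α₁ α₂ with h3 | h3 | h3
    · -- α₁ < α₂
      have ht : (0:ℝ) < α₂ - α₁ := by linarith
      have hw : (0:ℝ) < (α₂ - α₁) ^ (p-1) := Real.rpow_pos_of_pos ht _
      have key := radon hp h1 ht β₁ (β₂ - β₁)
      have e1 : β₁ + (β₂ - β₁) = β₂ := by ring
      have e2 : α₁ + (α₂ - α₁) = α₂ := by ring
      rw [e1, e2] at key
      have hphi3 : phiP p (α₁ - α₂) = -((α₂ - α₁) ^ (p-1)) := by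
        rw [show α₁ - α₂ = -(α₂ - α₁) by ring, phiP_neg', phiP_pos ht]
      have hRR : R = (|β₂|^p - α₂^(p-1) * (|β₁|^p / α₁^(p-1) + |β₂-β₁|^p / (α₂-α₁)^(p-1)))
          * ((α₂ - α₁)^(p-1) / α₂^(p-1)) := by
        rw [hR, phiP_pos h1, phiP_pos h2, hphi3, abs_sub_comm β₁ β₂]
        field_simp
        ring
      refine ⟨fun h => absurd hd (by linarith), fun _ => ?_, ?_⟩
      · rw [hRR]
        exact mul_nonpos_of_nonpos_of_nonneg (by linarith [key.1]) (by positivity)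
      · rw [hRR, mul_eq_zero]
        have h4 : (α₂-α₁)^(p-1) / α₂^(p-1) ≠ 0 := ne_of_gt (by positivity)
        rw [or_iff_left h4, sub_eq_zero, key.2]
        constructor <;> intro h <;> linear_combination h
    · -- α₁ = α₂
      subst h3
      have hRR : R = -(|β₁ - β₂| ^ p) := by
        rw [hR, sub_self, phiP_zero]; ring
      have hnn : (0:ℝ) ≤ |β₁ - β₂| ^ p := Real.rpow_nonneg (abs_nonneg _) _
      refine ⟨fun h => absurd hd (by linarith), fun _ => by linarith, ?_⟩
      rw [hRR, neg_eq_zero]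
      rw [Real.rpow_eq_zero (abs_nonneg _) (by linarith)]
      rw [abs_eq_zero, sub_eq_zero]
      constructor
      · intro h; rw [h]
      · intro h; exact mul_right_cancel₀ (by intro h'; exact hα₂ h') h
    · -- α₂ < α₁
      have ht : (0:ℝ) < α₁ - α₂ := by linarith
      have hw : (0:ℝ) < (α₁ - α₂) ^ (p-1) := Real.rpow_pos_of_pos ht _
      have key := radon hp h2 ht β₂ (β₁ - β₂)
      have e1 : β₂ + (β₁ - β₂) = β₁ := by ring
      have e2 : α₂ + (α₁ - α₂) = α₁ := by ring
      rw [e1, e2] at key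
      have hphi3 : phiP p (α₁ - α₂) = (α₁ - α₂) ^ (p-1) := phiP_pos ht
      have hRR : R = (|β₁|^p - α₁^(p-1) * (|β₂|^p / α₂^(p-1) + |β₁-β₂|^p / (α₁-α₂)^(p-1)))
          * ((α₁ - α₂)^(p-1) / α₁^(p-1)) := by
        rw [hR, phiP_pos h1, phiP_pos h2, hphi3]
        field_simp
        ring
      refine ⟨fun h => absurd hd (by linarith), fun _ => ?_, ?_⟩
      · rw [hRR]
        exact mul_nonpos_of_nonpos_of_nonneg (by linarith [key.1]) (by positivity)
      · rw [hRR, mul_eq_zero]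
        have h4 : (α₁-α₂)^(p-1) / α₁^(p-1) ≠ 0 := ne_of_gt (by positivity)
        rw [or_iff_left h4, sub_eq_zero, key.2]
        constructor <;> intro h <;> linear_combination -h

/-- sign and vanishing of
`R(β₁,β₂) = (|β₁|^p/φ_p(α₁) − |β₂|^p/φ_p(α₂))·φ_p(α₁−α₂) − |β₁−β₂|^p`. -/
theorem stmt19 (p : ℝ) (hp : 1 < p) (α₁ α₂ : ℝ) (hα₁ : α₁ ≠ 0) (hα₂ : α₂ ≠ 0)
    (β₁ β₂ : ℝ) (R : ℝ)
    (hR : R = (|β₁| ^ p / phiP p α₁ - |β₂| ^ p / phiP p α₂) * phiP p (α₁ - α₂)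
      - |β₁ - β₂| ^ p) :
    (α₂ / α₁ < 0 → 0 ≤ R) ∧ (0 < α₂ / α₁ → R ≤ 0) ∧ (R = 0 ↔ β₁ * α₂ = β₂ * α₁) := by
  rcases hα₁.lt_or_gt with h1 | h1
  · have hR' : R = (|β₁| ^ p / phiP p (-α₁) - |β₂| ^ p / phiP p (-α₂)) * phiP p (-α₁ - -α₂)
        - |β₁ - β₂| ^ p := by
      rw [show -α₁ - -α₂ = -(α₁ - α₂) by ring, phiP_neg', phiP_neg', phiP_neg', hR]
      field_simp
      ring
    have := stmt19_aux p hp (-α₁) (-α₂) (neg_pos.mpr h1) (neg_ne_zero.mpr hα₂) β₁ β₂ R hR'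
    rw [neg_div_neg_eq] at this
    refine ⟨this.1, this.2.1, ?_⟩
    rw [this.2.2]
    constructor <;> intro h <;> linarith
  · exact stmt19_aux p hp α₁ α₂ h1 hα₂ β₁ β₂ R hR
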